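/- Let A be a real symmetric n×n matrix with spectral decomposition A = Σ_λ λ u_λ u_λᵀ, where the u_λ form an orthonormal basis of eigenvectors. Then the matrix A⁺ := Σ_{λ > 0} λ u_λ u_λᵀ is the projection of A onto the cone of positive semidefinite symmetric matrices with respect to the Frobenius norm; that is, A⁺ is PSD and ‖A − A⁺‖_F ≤ ‖A − X‖_F for every PSD symmetric matrix X. -/

import Mathlib

/-!
A - A⁺ = ∑ min(μᵢ, 0) uᵢuᵢᵀ. Pairing a rank-one matrix uuᵀ with X in the Frobenius inner product
gives uᵀXu, so by orthonormality A - A⁺ is orthogonal to A⁺, and its pairing with any PSD X is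
∑ min(μᵢ, 0) uᵢᵀXuᵢ ≤ 0. Expanding
‖A - X‖² = ‖A - A⁺‖² + 2⟨A - A⁺, A⁺ - X⟩ + ‖A⁺ - X‖² then gives ‖A - A⁺‖ ≤ ‖A - X‖.
-/

open Finset Matrix

section RankOne

variable {ι m R : Type*} [Fintype ι] [Fintype m] [CommSemiring R]

theorem sum_sum_vecMulVec_self_mul (u : m → R) (X : Matrix m m R) :
    ∑ a, ∑ b, vecMulVec u u a b * X a b = u ⬝ᵥ X *ᵥ u := by
  simp only [vecMulVec_apply, dotProduct, mulVec, mul_sum]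
  exact sum_congr rfl fun a _ => sum_congr rfl fun b _ => by ring

theorem sum_sum_sum_smul_vecMulVec_self_mul (c : ι → R) (u : ι → m → R) (X : Matrix m m R) :
    ∑ a, ∑ b, (∑ i, c i • vecMulVec (u i) (u i)) a b * X a b
      = ∑ i, c i * (u i ⬝ᵥ X *ᵥ u i) := by
  simp only [Matrix.sum_apply, Matrix.smul_apply, smul_eq_mul, sum_mul, mul_assoc,
    ← sum_sum_vecMulVec_self_mul, mul_sum]
  exact (sum_congr rfl fun _ _ => sum_comm).trans sum_comm

theorem dotProduct_sum_smul_vecMulVec_self_mulVec (c : ι → R) (u : ι → m → R) (x : m → R) :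
    x ⬝ᵥ (∑ i, c i • vecMulVec (u i) (u i)) *ᵥ x = ∑ i, c i * (u i ⬝ᵥ x) ^ 2 := by
  simp only [sum_mulVec, smul_mulVec, vecMulVec_mulVec, dotProduct_sum, dotProduct_smul,
    op_smul_eq_mul, smul_eq_mul]
  refine sum_congr rfl fun i _ => ?_
  rw [dotProduct_comm x (u i), sq]

theorem dotProduct_sum_smul_vecMulVec_self_mulVec_of_orthonormal [DecidableEq ι]
    (c : ι → R) {u : ι → m → R} (horth : ∀ i j, u i ⬝ᵥ u j = if i = j then 1 else 0) (j : ι) :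
    u j ⬝ᵥ (∑ i, c i • vecMulVec (u i) (u i)) *ᵥ u j = c j := by
  simp [dotProduct_sum_smul_vecMulVec_self_mulVec, horth]

end RankOne

theorem posSemidef_sum_smul_vecMulVec_self {ι m R : Type*} [Fintype ι] [Fintype m]
    [CommRing R] [PartialOrder R] [IsOrderedRing R] [StarRing R] [StarOrderedRing R]
    [TrivialStar R] {c : ι → R} (hc : ∀ i, 0 ≤ c i) (u : ι → m → R) :
    (∑ i, c i • vecMulVec (u i) (u i)).PosSemidef :=
  posSemidef_sum _ fun i _ => by
    simpa using (posSemidef_vecMulVec_self_star (u i)).smul (hc i)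

theorem sum_sum_sq_sub_le_of_orthogonal {m n R : Type*} [Fintype m] [Fintype n]
    [CommRing R] [LinearOrder R] [IsStrictOrderedRing R] {A P X : Matrix m n R}
    (hP : ∑ i, ∑ j, (A i j - P i j) * P i j = 0)
    (hX : ∑ i, ∑ j, (A i j - P i j) * X i j ≤ 0) :
    ∑ i, ∑ j, (A i j - P i j) ^ 2 ≤ ∑ i, ∑ j, (A i j - X i j) ^ 2 := by
  have hpyth : ∑ i, ∑ j, (A i j - X i j) ^ 2 = ∑ i, ∑ j, (A i j - P i j) ^ 2
      + 2 * (∑ i, ∑ j, (A i j - P i j) * P i j - ∑ i, ∑ j, (A i j - P i j) * X i j)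
      + ∑ i, ∑ j, (P i j - X i j) ^ 2 := by
    simp only [mul_sub, mul_sum, ← sum_sub_distrib, ← sum_add_distrib]
    exact sum_congr rfl fun i _ => sum_congr rfl fun j _ => by ring
  have hPX : 0 ≤ ∑ i, ∑ j, (P i j - X i j) ^ 2 := by positivity
  linarith

theorem stmt15_general {n : ℕ} (A : Matrix (Fin n) (Fin n) ℝ)
    (μ : Fin n → ℝ) (u : Fin n → Fin n → ℝ)
    (horth : ∀ i j, u i ⬝ᵥ u j = if i = j then (1 : ℝ) else 0)
    (hdec : A = ∑ i, μ i • Matrix.vecMulVec (u i) (u i)) :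
    let Aplus : Matrix (Fin n) (Fin n) ℝ :=
      ∑ i, max (μ i) 0 • Matrix.vecMulVec (u i) (u i)
    Aplus.PosSemidef ∧
    ∀ X : Matrix (Fin n) (Fin n) ℝ, X.PosSemidef →
      ∑ i, ∑ j, (A i j - Aplus i j) ^ 2 ≤ ∑ i, ∑ j, (A i j - X i j) ^ 2 := by
  intro Aplus
  have hres : A - Aplus = ∑ i, min (μ i) 0 • vecMulVec (u i) (u i) := by
    simp only [hdec, Aplus, ← sum_sub_distrib, ← sub_smul]
    refine sum_congr rfl fun i _ => ?_
    rw [eq_sub_of_add_eq (min_add_max (μ i) 0), add_zero]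
  have hpair (X : Matrix (Fin n) (Fin n) ℝ) : ∑ i, ∑ j, (A i j - Aplus i j) * X i j
      = ∑ i, min (μ i) 0 * (u i ⬝ᵥ X *ᵥ u i) := by
    simp only [← Matrix.sub_apply, hres, sum_sum_sum_smul_vecMulVec_self_mul]
  refine ⟨posSemidef_sum_smul_vecMulVec_self (fun i => le_max_right _ _) u, fun X hX => ?_⟩
  refine sum_sum_sq_sub_le_of_orthogonal ?_ ?_
  · rw [hpair]
    refine sum_eq_zero fun i _ => ?_
    rw [dotProduct_sum_smul_vecMulVec_self_mulVec_of_orthonormal _ horth, min_mul_max, mul_zero]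
  · rw [hpair]
    refine sum_nonpos fun i _ => mul_nonpos_of_nonpos_of_nonneg (min_le_right _ _) ?_
    simpa using hX.dotProduct_mulVec_nonneg (u i)

theorem stmt15 {n : ℕ} (A : Matrix (Fin n) (Fin n) ℝ) (hA : A.IsSymm)
    (μ : Fin n → ℝ) (u : Fin n → Fin n → ℝ)
    (horth : ∀ i j, u i ⬝ᵥ u j = if i = j then (1 : ℝ) else 0)
    (hdec : A = ∑ i, μ i • Matrix.vecMulVec (u i) (u i)) :
    let Aplus : Matrix (Fin n) (Fin n) ℝ :=
      ∑ i, max (μ i) 0 • Matrix.vecMulVec (u i) (u i)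
    Aplus.PosSemidef ∧
    ∀ X : Matrix (Fin n) (Fin n) ℝ, X.PosSemidef →
      ∑ i, ∑ j, (A i j - Aplus i j) ^ 2 ≤ ∑ i, ∑ j, (A i j - X i j) ^ 2 :=
  stmt15_general A μ u horth hdec
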